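/- arXiv:1710.04824 — 3 statements merged into one kernel-verified Lean document; each statement's English description precedes it below -/
import Mathlib

section
/- Let K be symmetric positive definite and d, m, μ ∈ R^n satisfy the basic equation (d-m)^T K^{-1} (m-μ) = 1. Then (K + (m-μ)(m-μ)^T)^{-1}(d-μ) = K^{-1}(d-m); that is, the CE detector direction at such μ coincides exactly with the matched-filter direction. -/
/-! Since `K⁻¹` is symmetric, the basic equation also reads `(m - μ) ⬝ᵥ K⁻¹ (d - m) = 1`, and then
`(K + (m - μ)(m - μ)ᵀ) K⁻¹ (d - m) = (d - m) + (m - μ) = d - μ`; the rank-one update is positive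
definite, hence invertible. -/

open Matrix

section

variable {ι R : Type*} [Fintype ι] [DecidableEq ι] [CommRing R]

lemma add_vecMulVec_mulVec_inv_mulVec {K : Matrix ι ι R} (hK : IsUnit K.det) (u v w : ι → R) :
    (K + vecMulVec u v) *ᵥ (K⁻¹ *ᵥ w) = w + (v ⬝ᵥ (K⁻¹ *ᵥ w)) • u := by
  rw [add_mulVec, mulVec_mulVec, mul_nonsing_inv _ hK, one_mulVec, vecMulVec_mulVec,
    op_smul_eq_smul]

lemma inv_add_vecMulVec_mulVec_add {K : Matrix ι ι R} {u v w : ι → R} (hK : IsUnit K.det)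
    (hKuv : IsUnit (K + vecMulVec u v).det) (hvw : v ⬝ᵥ (K⁻¹ *ᵥ w) = 1) :
    (K + vecMulVec u v)⁻¹ *ᵥ (w + u) = K⁻¹ *ᵥ w := by
  have hsolve := add_vecMulVec_mulVec_inv_mulVec hK u v w
  rw [hvw, one_smul] at hsolve
  rw [← hsolve, mulVec_mulVec, nonsing_inv_mul _ hKuv, one_mulVec]

omit [DecidableEq ι] in
lemma IsSymm.dotProduct_mulVec_comm {K : Matrix ι ι R} (hK : K.IsSymm) (x y : ι → R) :
    x ⬝ᵥ (K *ᵥ y) = y ⬝ᵥ (K *ᵥ x) := by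
  rw [dotProduct_mulVec, ← mulVec_transpose, hK.eq, dotProduct_comm]

end

theorem CE_eq_MF (n : ℕ) (K : Matrix (Fin n) (Fin n) ℝ) (hK : K.PosDef)
    (d m μ : Fin n → ℝ)
    (hbasic : (d - m) ⬝ᵥ (K⁻¹ *ᵥ (m - μ)) = 1) :
    (K + vecMulVec (m - μ) (m - μ))⁻¹ *ᵥ (d - μ) = K⁻¹ *ᵥ (d - m) := by
  have hR : (K + vecMulVec (m - μ) (m - μ)).PosDef :=
    hK.add_posSemidef (by simpa using posSemidef_vecMulVec_self_star (m - μ))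
  have hdual : (m - μ) ⬝ᵥ (K⁻¹ *ᵥ (d - m)) = 1 := by
    rwa [IsSymm.dotProduct_mulVec_comm (isHermitian_iff_isSymm.mp hK.isHermitian).inv]
  rw [← sub_add_sub_cancel d m μ]
  exact inv_add_vecMulVec_mulVec_add ((isUnit_iff_isUnit_det _).mp hK.isUnit)
    ((isUnit_iff_isUnit_det _).mp hR.isUnit) hdual
end

section
/- Let K be symmetric positive definite and d, m ∈ R^n with d ≠ m. For every μ ∈ R^n, g(μ) := (d-μ)^T (K + (m-μ)(m-μ)^T)^{-1}(d-μ) ≤ (d-m)^T K^{-1}(d-m) + 1, with equality if and only if (d-m)^T K^{-1}(m-μ) = 1. -/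
/-!
By the Sherman–Morrison formula, with `s = d - m`, `v = m - μ`, `α = sᵀK⁻¹s`, `β = sᵀK⁻¹v` and
`γ = vᵀK⁻¹v`, the quadratic form `g(μ)` equals `α + 1 - (β - 1)² / (1 + γ)`. Since `K⁻¹` is
positive definite, `1 + γ > 0`, so `g(μ) ≤ α + 1` with equality exactly when `β = 1`.
-/

open Matrix

namespace Matrix

variable {ι : Type*} [Fintype ι]

theorem IsSymm.dotProduct_mulVec_comm {R : Type*} [CommSemiring R] {A : Matrix ι ι R}
    (hA : A.IsSymm) (x y : ι → R) :
    x ⬝ᵥ (A *ᵥ y) = y ⬝ᵥ (A *ᵥ x) := by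
  rw [dotProduct_mulVec, ← mulVec_transpose, hA.eq, dotProduct_comm]

variable [DecidableEq ι] {𝕜 : Type*} [Field 𝕜]

theorem add_vecMulVec_inv_eq_sub {A : Matrix ι ι 𝕜} (hA : IsUnit A) {u v : ι → 𝕜}
    (huv : 1 + v ⬝ᵥ (A⁻¹ *ᵥ u) ≠ 0) :
    (A + vecMulVec u v)⁻¹ =
      A⁻¹ - (1 + v ⬝ᵥ (A⁻¹ *ᵥ u))⁻¹ • vecMulVec (A⁻¹ *ᵥ u) (v ᵥ* A⁻¹) := by
  refine inv_eq_right_inv ?_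
  have hAA : A * A⁻¹ = 1 := mul_nonsing_inv A ((isUnit_iff_isUnit_det A).mp hA)
  rw [Matrix.mul_sub, Matrix.mul_smul, add_mul, add_mul, hAA, mul_vecMulVec, mul_vecMulVec,
    mulVec_mulVec, hAA, one_mulVec, vecMulVec_mul, vecMulVec_mulVec, op_smul_eq_smul,
    smul_vecMulVec]
  match_scalars
  · ring
  · field_simp
    ring

theorem dotProduct_add_vecMulVec_inv_mulVec {A : Matrix ι ι 𝕜} (hA : IsUnit A) {u v : ι → 𝕜}
    (huv : 1 + v ⬝ᵥ (A⁻¹ *ᵥ u) ≠ 0) (x y : ι → 𝕜) :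
    x ⬝ᵥ ((A + vecMulVec u v)⁻¹ *ᵥ y) =
      x ⬝ᵥ (A⁻¹ *ᵥ y) - (x ⬝ᵥ (A⁻¹ *ᵥ u)) * (v ⬝ᵥ (A⁻¹ *ᵥ y)) / (1 + v ⬝ᵥ (A⁻¹ *ᵥ u)) := by
  rw [add_vecMulVec_inv_eq_sub hA huv, sub_mulVec, smul_mulVec, vecMulVec_mulVec,
    dotProduct_sub, dotProduct_smul, dotProduct_smul, ← dotProduct_mulVec, op_smul_eq_smul,
    smul_eq_mul, smul_eq_mul]
  ring

theorem IsSymm.dotProduct_add_vecMulVec_self_inv_mulVec {K : Matrix ι ι 𝕜} (hK : K.IsSymm)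
    (hKu : IsUnit K) {v : ι → 𝕜} (hv : 1 + v ⬝ᵥ (K⁻¹ *ᵥ v) ≠ 0) (s : ι → 𝕜) :
    (s + v) ⬝ᵥ ((K + vecMulVec v v)⁻¹ *ᵥ (s + v)) =
      s ⬝ᵥ (K⁻¹ *ᵥ s) + 1 - (s ⬝ᵥ (K⁻¹ *ᵥ v) - 1) ^ 2 / (1 + v ⬝ᵥ (K⁻¹ *ᵥ v)) := by
  have hKinv : K⁻¹.IsSymm := by rw [IsSymm, transpose_nonsing_inv, hK.eq]
  rw [dotProduct_add_vecMulVec_inv_mulVec hKu hv, mulVec_add]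
  simp only [dotProduct_add, add_dotProduct, hKinv.dotProduct_mulVec_comm v s]
  field_simp
  ring

end Matrix

theorem g_upper_bound_general (n : ℕ) (K : Matrix (Fin n) (Fin n) ℝ) (hK : K.PosDef)
    (d m : Fin n → ℝ) (μ : Fin n → ℝ) :
    (d - μ) ⬝ᵥ ((K + vecMulVec (m - μ) (m - μ))⁻¹ *ᵥ (d - μ)) ≤
        (d - m) ⬝ᵥ (K⁻¹ *ᵥ (d - m)) + 1 ∧
    ((d - μ) ⬝ᵥ ((K + vecMulVec (m - μ) (m - μ))⁻¹ *ᵥ (d - μ)) =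
        (d - m) ⬝ᵥ (K⁻¹ *ᵥ (d - m)) + 1 ↔
      (d - m) ⬝ᵥ (K⁻¹ *ᵥ (m - μ)) = 1) := by
  have hγ : 0 < 1 + (m - μ) ⬝ᵥ (K⁻¹ *ᵥ (m - μ)) := by
    have := hK.inv.posSemidef.dotProduct_mulVec_nonneg (m - μ)
    rw [star_trivial] at this
    linarith
  have hKsymm : K.IsSymm := isHermitian_iff_isSymm.mp hK.isHermitian
  rw [← sub_add_sub_cancel d m μ,
    hKsymm.dotProduct_add_vecMulVec_self_inv_mulVec hK.isUnit hγ.ne']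
  constructor
  · exact sub_le_self _ (div_nonneg (sq_nonneg _) hγ.le)
  · rw [sub_eq_self, div_eq_zero_iff, or_iff_left hγ.ne', pow_eq_zero_iff two_ne_zero, sub_eq_zero]

theorem g_upper_bound (n : ℕ) (K : Matrix (Fin n) (Fin n) ℝ) (hK : K.PosDef)
    (d m : Fin n → ℝ) (hdm : d ≠ m) (μ : Fin n → ℝ) :
    (d - μ) ⬝ᵥ ((K + vecMulVec (m - μ) (m - μ))⁻¹ *ᵥ (d - μ)) ≤
        (d - m) ⬝ᵥ (K⁻¹ *ᵥ (d - m)) + 1 ∧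
    ((d - μ) ⬝ᵥ ((K + vecMulVec (m - μ) (m - μ))⁻¹ *ᵥ (d - μ)) =
        (d - m) ⬝ᵥ (K⁻¹ *ᵥ (d - m)) + 1 ↔
      (d - m) ⬝ᵥ (K⁻¹ *ᵥ (m - μ)) = 1) :=
  g_upper_bound_general n K hK d m μ
end

section
/- Let K be symmetric positive definite, d, m ∈ R^n with d ≠ m, and let R = K + m m^T (so R = the second-moment matrix when the mean is m and covariance K). Then d^T R^{-1} d ≤ (d-m)^T K^{-1} (d-m) + 1. Equivalently, the reciprocal output energy of CEM never exceeds that of the optimal CE detector. -/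
open Matrix

/-!
For positive definite `A`, `v ⬝ᵥ A⁻¹ v` is the maximum over `w` of `2 w ⬝ᵥ v - w ⬝ᵥ A w`.
Evaluate this for `R = K + m mᵀ` at its maximiser `w`: since `w ⬝ᵥ R w = w ⬝ᵥ K w + (w ⬝ᵥ m)²`,
its value equals `2 w ⬝ᵥ (d - m) - w ⬝ᵥ K w + 1 - (w ⬝ᵥ m - 1)²`, which is at most the maximum
for `K` and `d - m`, plus one.
-/

theorem Matrix.dotProduct_vecMulVec_mulVec {ι κ R : Type*} [Fintype ι] [Fintype κ] [CommSemiring R]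
    (w u : ι → R) (v x : κ → R) :
    w ⬝ᵥ (vecMulVec u v *ᵥ x) = (w ⬝ᵥ u) * (v ⬝ᵥ x) := by
  rw [vecMulVec_mulVec, op_smul_eq_smul, dotProduct_smul, smul_eq_mul, mul_comm]

namespace Matrix.PosDef

variable {ι : Type*} [Fintype ι] [DecidableEq ι] {A : Matrix ι ι ℝ}

theorem isGreatest_two_mul_dotProduct_sub (hA : A.PosDef) (v : ι → ℝ) :
    IsGreatest (Set.range fun w => 2 * (w ⬝ᵥ v) - w ⬝ᵥ (A *ᵥ w)) (v ⬝ᵥ (A⁻¹ *ᵥ v)) := by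
  have hAA : A *ᵥ (A⁻¹ *ᵥ v) = v := by
    rw [mulVec_mulVec, mul_nonsing_inv _ ((isUnit_iff_isUnit_det A).mp hA.isUnit), one_mulVec]
  refine ⟨⟨A⁻¹ *ᵥ v, ?_⟩, ?_⟩
  · simp only [hAA, dotProduct_comm (A⁻¹ *ᵥ v) v]
    ring
  · rintro _ ⟨w, rfl⟩
    have hAt : Aᵀ = A := by simpa using hA.isHermitian.eq
    have hsym : ∀ x y : ι → ℝ, x ⬝ᵥ (A *ᵥ y) = y ⬝ᵥ (A *ᵥ x) := fun x y => by
      rw [dotProduct_mulVec, ← mulVec_transpose, hAt, dotProduct_comm]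
    -- completing the square around the maximiser `A⁻¹ v`
    have hsq := hA.posSemidef.dotProduct_mulVec_nonneg (w - A⁻¹ *ᵥ v)
    simp only [star_trivial, mulVec_sub, hAA, dotProduct_sub, sub_dotProduct] at hsq
    rw [hsym (A⁻¹ *ᵥ v) w, hAA, dotProduct_comm (A⁻¹ *ᵥ v) v] at hsq
    linarith

end Matrix.PosDef

theorem CEM_le_CE_general (n : ℕ) (K : Matrix (Fin n) (Fin n) ℝ) (hK : K.PosDef)
    (d m : Fin n → ℝ)
    (R : Matrix (Fin n) (Fin n) ℝ) (hR : R = K + vecMulVec m m) :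
    d ⬝ᵥ (R⁻¹ *ᵥ d) ≤ (d - m) ⬝ᵥ (K⁻¹ *ᵥ (d - m)) + 1 := by
  have hRpos : R.PosDef := hR ▸ hK.add_posSemidef (by simpa using posSemidef_vecMulVec_self_star m)
  obtain ⟨w, hw⟩ := (hRpos.isGreatest_two_mul_dotProduct_sub d).1
  have hKw := (hK.isGreatest_two_mul_dotProduct_sub (d - m)).2 ⟨w, rfl⟩
  calc d ⬝ᵥ (R⁻¹ *ᵥ d) = 2 * (w ⬝ᵥ d) - w ⬝ᵥ (R *ᵥ w) := hw.symm
    _ = 2 * (w ⬝ᵥ (d - m)) - w ⬝ᵥ (K *ᵥ w) + 1 - (w ⬝ᵥ m - 1) ^ 2 := by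
      rw [hR, add_mulVec, dotProduct_add, dotProduct_vecMulVec_mulVec, dotProduct_sub,
        dotProduct_comm m w]
      ring
    _ ≤ (d - m) ⬝ᵥ (K⁻¹ *ᵥ (d - m)) + 1 := by linarith [sq_nonneg (w ⬝ᵥ m - 1)]

theorem CEM_le_CE (n : ℕ) (K : Matrix (Fin n) (Fin n) ℝ) (hK : K.PosDef)
    (d m : Fin n → ℝ) (hdm : d ≠ m)
    (R : Matrix (Fin n) (Fin n) ℝ) (hR : R = K + vecMulVec m m) :
    d ⬝ᵥ (R⁻¹ *ᵥ d) ≤ (d - m) ⬝ᵥ (K⁻¹ *ᵥ (d - m)) + 1 :=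
  CEM_le_CE_general n K hK d m R hR
end
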